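/- arXiv:1801.02566 — 2 statements merged into one kernel-verified Lean document; each statement's English description precedes it below -/
import Mathlib

section
/- The class of Bernoulli product measures on Cantor space is effectively orthogonal: if p ≠ q in [0,1], then no real is Martin-Löf random with respect to both the Bernoulli(p) measure and the Bernoulli(q) measure. -/
open MeasureTheory Filter

abbrev Cantor : Type := ℕ → Bool
abbrev Str : Type := List Bool

def restr (X : Cantor) (n : ℕ) : Str := (List.range n).map X

def cyl (σ : Str) : Set Cantor := {X | restr X σ.length = σ}

def openOf (V : Set Str) : Set Cantor := ⋃ σ ∈ V, cyl σ

def CE {α : Type} [Primcodable α] (S : Set α) : Prop :=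
  ∃ f : α →. Unit, Partrec f ∧ ∀ a, a ∈ S ↔ (f a).Dom

def MLTest (μ : Measure Cantor) (U : ℕ → Set Str) : Prop :=
  CE {p : ℕ × Str | p.2 ∈ U p.1} ∧ ∀ i, μ (openOf (U i)) ≤ 1 / 2 ^ i

def MLRandom (μ : Measure Cantor) (X : Cantor) : Prop :=
  ∀ U, MLTest μ U → ∃ i, X ∉ openOf (U i)

noncomputable def cm (μ : Measure Cantor) (σ : Str) : ℝ := (μ (cyl σ)).toReal

def ComputableMeasure (μ : Measure Cantor) : Prop :=
  IsProbabilityMeasure μ ∧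
    ∃ g : Str × ℕ → ℚ, Computable g ∧
      ∀ σ n, |(g (σ, n) : ℝ) - cm μ σ| ≤ (2 : ℝ)⁻¹ ^ n

def interleave (Z Y : Cantor) : Cantor := fun n => if n % 2 = 0 then Z (n / 2) else Y (n / 2)

/-- `μ` is the Bernoulli product measure with success probability `p`. -/
def BernoulliSpec (p : ℝ) (μ : Measure Cantor) : Prop :=
  IsProbabilityMeasure μ ∧
    ∀ σ : Str, μ (cyl σ) = ENNReal.ofReal (p ^ σ.count true * (1 - p) ^ σ.count false)

/-! If `p < q`, pick a rational `a / b` strictly between them. Under Bernoulli(`p`) the centred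
number of ones among the first `n` bits has fourth moment at most `n²`, so by Markov's inequality
the strings of length `n` with frequency of ones at least `a / b` have total measure `O(1/n²)`.
The strings of length at least `N` with that property therefore cover a set of measure `O(1/N)`,
and taking `N = K·2^i` turns them into a Martin-Löf test. Hence a Bernoulli(`p`)-random real
eventually has frequency of ones below `a / b`, and symmetrically a Bernoulli(`q`)-random real
eventually has it above `a / b`. -/

def strsOfLength : ℕ → Finset Str
  | 0 => {[]}
  | n + 1 => (strsOfLength n).image (List.cons true) ∪ (strsOfLength n).image (List.cons false)

theorem mem_strsOfLength {n : ℕ} {σ : Str} : σ ∈ strsOfLength n ↔ σ.length = n := by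
  induction n generalizing σ with
  | zero => simp [strsOfLength]
  | succ n ih =>
    rcases σ with _ | ⟨_ | _, τ⟩ <;> simp [strsOfLength, ih]

theorem sum_strsOfLength_succ {M : Type*} [AddCommMonoid M] (F : Str → M) (n : ℕ) :
    ∑ σ ∈ strsOfLength (n + 1), F σ =
      ∑ σ ∈ strsOfLength n, F (true :: σ) + ∑ σ ∈ strsOfLength n, F (false :: σ) := by
  rw [strsOfLength, Finset.sum_union, Finset.sum_image, Finset.sum_image] <;>
    simp [Finset.disjoint_left]

noncomputable def bernoulliWeight (p : ℝ) (σ : Str) : ℝ :=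
  p ^ σ.count true * (1 - p) ^ σ.count false

noncomputable def deviation (p : ℝ) (σ : Str) : ℝ := σ.count true - σ.length * p

section Moments

variable (p : ℝ)

theorem bernoulliWeight_cons_true (σ : Str) :
    bernoulliWeight p (true :: σ) = p * bernoulliWeight p σ := by
  simp [bernoulliWeight, pow_succ]; ring

theorem bernoulliWeight_cons_false (σ : Str) :
    bernoulliWeight p (false :: σ) = (1 - p) * bernoulliWeight p σ := by
  simp [bernoulliWeight, pow_succ]; ring

theorem deviation_cons_true (σ : Str) : deviation p (true :: σ) = deviation p σ + (1 - p) := by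
  simp [deviation]; ring

theorem deviation_cons_false (σ : Str) : deviation p (false :: σ) = deviation p σ - p := by
  simp [deviation]; ring

theorem bernoulliWeight_nonneg {p : ℝ} (hp : p ∈ Set.Icc (0 : ℝ) 1) (σ : Str) :
    0 ≤ bernoulliWeight p σ :=
  mul_nonneg (pow_nonneg hp.1 _) (pow_nonneg (sub_nonneg.2 hp.2) _)

theorem sum_bernoulliWeight_mul_succ (g : ℝ → ℝ) (n : ℕ) :
    ∑ σ ∈ strsOfLength (n + 1), bernoulliWeight p σ * g (deviation p σ) =
      ∑ σ ∈ strsOfLength n, bernoulliWeight p σ *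
        (p * g (deviation p σ + (1 - p)) + (1 - p) * g (deviation p σ - p)) := by
  rw [sum_strsOfLength_succ, ← Finset.sum_add_distrib]
  refine Finset.sum_congr rfl fun σ _ => ?_
  rw [bernoulliWeight_cons_true, bernoulliWeight_cons_false, deviation_cons_true,
    deviation_cons_false]
  ring

theorem sum_bernoulliWeight (n : ℕ) : ∑ σ ∈ strsOfLength n, bernoulliWeight p σ = 1 := by
  induction n with
  | zero => simp [strsOfLength, bernoulliWeight]
  | succ n ih =>
    simpa [ih] using sum_bernoulliWeight_mul_succ p (fun _ => 1) n

theorem sum_bernoulliWeight_mul_deviation (n : ℕ) :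
    ∑ σ ∈ strsOfLength n, bernoulliWeight p σ * deviation p σ = 0 := by
  induction n with
  | zero => simp [strsOfLength, deviation]
  | succ n ih =>
    rw [sum_bernoulliWeight_mul_succ p (fun x => x), ← ih]
    exact Finset.sum_congr rfl fun σ _ => by ring

theorem sum_bernoulliWeight_mul_deviation_sq (n : ℕ) :
    ∑ σ ∈ strsOfLength n, bernoulliWeight p σ * deviation p σ ^ 2 = n * (p * (1 - p)) := by
  induction n with
  | zero => simp [strsOfLength, deviation]
  | succ n ih =>
    rw [sum_bernoulliWeight_mul_succ p (· ^ 2)]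
    calc _ = ∑ σ ∈ strsOfLength n, bernoulliWeight p σ * deviation p σ ^ 2
          + p * (1 - p) * ∑ σ ∈ strsOfLength n, bernoulliWeight p σ := by
          simp only [Finset.mul_sum, ← Finset.sum_add_distrib]
          exact Finset.sum_congr rfl fun σ _ => by ring
      _ = (n + 1 : ℕ) * (p * (1 - p)) := by
          rw [ih, sum_bernoulliWeight]; push_cast; ring

theorem sum_bernoulliWeight_mul_deviation_pow_four (n : ℕ) :
    ∑ σ ∈ strsOfLength n, bernoulliWeight p σ * deviation p σ ^ 4 =
      n * (p * (1 - p) ^ 4 + (1 - p) * p ^ 4) + 3 * n * (n - 1) * (p * (1 - p)) ^ 2 := by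
  induction n with
  | zero => simp [strsOfLength, deviation]
  | succ n ih =>
    rw [sum_bernoulliWeight_mul_succ p (· ^ 4)]
    calc _ = ∑ σ ∈ strsOfLength n, bernoulliWeight p σ * deviation p σ ^ 4
          + 6 * (p * (1 - p)) * ∑ σ ∈ strsOfLength n, bernoulliWeight p σ * deviation p σ ^ 2
          + 4 * (p * (1 - p)) * ((1 - p) ^ 2 - p ^ 2) *
              ∑ σ ∈ strsOfLength n, bernoulliWeight p σ * deviation p σ
          + (p * (1 - p) ^ 4 + (1 - p) * p ^ 4) *
              ∑ σ ∈ strsOfLength n, bernoulliWeight p σ := by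
          simp only [Finset.mul_sum, ← Finset.sum_add_distrib]
          exact Finset.sum_congr rfl fun σ _ => by ring
      _ = _ := by
          rw [ih, sum_bernoulliWeight_mul_deviation_sq, sum_bernoulliWeight_mul_deviation,
            sum_bernoulliWeight]
          push_cast; ring

end Moments

theorem sum_bernoulliWeight_mul_deviation_pow_four_le {p : ℝ} (hp : p ∈ Set.Icc (0 : ℝ) 1)
    (n : ℕ) : ∑ σ ∈ strsOfLength n, bernoulliWeight p σ * deviation p σ ^ 4 ≤ (n : ℝ) ^ 2 := by
  obtain ⟨hp0, hp1⟩ := hp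
  have hvar0 : 0 ≤ p * (1 - p) := mul_nonneg hp0 (sub_nonneg.2 hp1)
  have hvar : p * (1 - p) ≤ 1 / 4 := by nlinarith [sq_nonneg (2 * p - 1)]
  have hcentral : p * (1 - p) ^ 4 + (1 - p) * p ^ 4 ≤ 1 / 4 := by
    have : p * (1 - p) ^ 4 + (1 - p) * p ^ 4 = p * (1 - p) * ((1 - p) ^ 3 + p ^ 3) := by ring
    rw [this]
    refine (mul_le_of_le_one_right hvar0 ?_).trans hvar
    nlinarith
  rw [sum_bernoulliWeight_mul_deviation_pow_four]
  rcases n with _ | n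
  · simp
  have hn : (0 : ℝ) ≤ n := n.cast_nonneg
  push_cast
  nlinarith [mul_le_mul_of_nonneg_left hcentral (by linarith : (0 : ℝ) ≤ n + 1),
    mul_le_mul_of_nonneg_left (pow_le_pow_left₀ hvar0 hvar 2)
      (by positivity : (0 : ℝ) ≤ 3 * (n + 1) * n)]

theorem sum_bernoulliWeight_le_of_le_abs_deviation {p : ℝ} (hp : p ∈ Set.Icc (0 : ℝ) 1)
    {ε : ℝ} (hε : 0 ≤ ε) {n : ℕ} {B : Finset Str} (hB : B ⊆ strsOfLength n)
    (hdev : ∀ σ ∈ B, ε * n ≤ |deviation p σ|) :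
    (ε * n) ^ 4 * ∑ σ ∈ B, bernoulliWeight p σ ≤ (n : ℝ) ^ 2 :=
  calc (ε * n) ^ 4 * ∑ σ ∈ B, bernoulliWeight p σ
      = ∑ σ ∈ B, bernoulliWeight p σ * (ε * n) ^ 4 := by
        rw [Finset.mul_sum]; simp only [mul_comm]
    _ ≤ ∑ σ ∈ B, bernoulliWeight p σ * deviation p σ ^ 4 := by
      refine Finset.sum_le_sum fun σ hσ =>
        mul_le_mul_of_nonneg_left ?_ (bernoulliWeight_nonneg hp σ)
      exact (pow_le_pow_left₀ (by positivity) (hdev σ hσ) 4).trans_eq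
        (Even.pow_abs ⟨2, rfl⟩ _)
    _ ≤ ∑ σ ∈ strsOfLength n, bernoulliWeight p σ * deviation p σ ^ 4 :=
      Finset.sum_le_sum_of_subset_of_nonneg hB fun σ _ _ =>
        mul_nonneg (bernoulliWeight_nonneg hp σ) (by positivity)
    _ ≤ (n : ℝ) ^ 2 := sum_bernoulliWeight_mul_deviation_pow_four_le hp n

theorem sum_range_ite_inv_sq_le {N : ℕ} (hN : 0 < N) (M : ℕ) :
    ∑ n ∈ Finset.range M, (if N ≤ n then ((n : ℝ) ^ 2)⁻¹ else 0) ≤ 2 / N := by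
  rw [← Finset.sum_filter]
  calc _ ≤ ∑ n ∈ Finset.Ioo (N - 1) M, ((n : ℝ) ^ 2)⁻¹ := by
        refine Finset.sum_le_sum_of_subset_of_nonneg (fun n hn => ?_) fun _ _ _ => by positivity
        simp only [Finset.mem_filter, Finset.mem_range, Finset.mem_Ioo] at hn ⊢
        omega
    _ ≤ 2 / ((N - 1 : ℕ) + 1 : ℝ) := sum_Ioo_inv_sq_le _ _
    _ = 2 / N := by rw [Nat.cast_pred hN, sub_add_cancel]

theorem length_restr (X : Cantor) (n : ℕ) : (restr X n).length = n := by
  simp [restr]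

theorem mem_cyl_restr (X : Cantor) (n : ℕ) : X ∈ cyl (restr X n) := by
  simp only [cyl, Set.mem_ofPred_eq, length_restr]

theorem measure_openOf_le_tsum (μ : Measure Cantor) (V : Set Str) [DecidablePred (· ∈ V)] :
    μ (openOf V) ≤ ∑' n, ∑ σ ∈ (strsOfLength n).filter (· ∈ V), μ (cyl σ) := by
  have hcover : openOf V ⊆ ⋃ n, ⋃ σ ∈ (strsOfLength n).filter (· ∈ V), cyl σ := by
    intro X hX
    simp only [openOf, Set.mem_iUnion] at hX ⊢
    obtain ⟨σ, hσ, hX⟩ := hX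
    exact ⟨σ.length, σ, by simp [mem_strsOfLength, hσ], hX⟩
  exact (measure_mono hcover).trans <| (measure_iUnion_le _).trans <|
    ENNReal.tsum_le_tsum fun n => measure_biUnion_finset_le _ _

theorem BernoulliSpec.measure_cyl {p : ℝ} {μ : Measure Cantor} (hμ : BernoulliSpec p μ)
    (σ : Str) : μ (cyl σ) = ENNReal.ofReal (bernoulliWeight p σ) :=
  hμ.2 σ

theorem BernoulliSpec.measure_openOf_le {p : ℝ} {μ : Measure Cantor} (hμ : BernoulliSpec p μ)
    (hp : p ∈ Set.Icc (0 : ℝ) 1) {ε : ℝ} (hε : 0 < ε) {V : Set Str}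
    (hdev : ∀ σ ∈ V, ε * σ.length ≤ |deviation p σ|) {N : ℕ} (hN : 0 < N) :
    μ (openOf {σ | σ ∈ V ∧ N ≤ σ.length}) ≤ ENNReal.ofReal ((ε ^ 4)⁻¹ * (2 / N)) := by
  classical
  set W := {σ | σ ∈ V ∧ N ≤ σ.length}
  have hlevel (n : ℕ) : ∑ σ ∈ (strsOfLength n).filter (· ∈ W), μ (cyl σ) ≤
      ENNReal.ofReal ((ε ^ 4)⁻¹ * if N ≤ n then ((n : ℝ) ^ 2)⁻¹ else 0) := by
    have hlen : ∀ σ ∈ (strsOfLength n).filter (· ∈ W), σ ∈ V ∧ N ≤ n ∧ σ.length = n := by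
      intro σ hσ
      simp only [Finset.mem_filter, mem_strsOfLength, W, Set.mem_ofPred_eq] at hσ
      exact ⟨hσ.2.1, hσ.1 ▸ hσ.2.2, hσ.1⟩
    split_ifs with hNn
    · have hn : (0 : ℝ) < n := by exact_mod_cast hN.trans_le hNn
      have hmarkov := sum_bernoulliWeight_le_of_le_abs_deviation hp hε.le
        (B := (strsOfLength n).filter (· ∈ W)) (Finset.filter_subset _ _)
        fun σ hσ => (hlen σ hσ).2.2 ▸ hdev σ (hlen σ hσ).1
      rw [Finset.sum_congr rfl fun σ _ => hμ.measure_cyl σ,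
        ← ENNReal.ofReal_sum_of_nonneg fun σ _ => bernoulliWeight_nonneg hp σ]
      refine ENNReal.ofReal_le_ofReal ?_
      rw [← mul_inv, ← one_div, le_div_iff₀ (by positivity)]
      refine le_of_mul_le_mul_left ?_ (by positivity : (0 : ℝ) < n ^ 2)
      linear_combination hmarkov
    · rw [Finset.sum_eq_zero fun σ hσ => absurd (hlen σ hσ).2.1 hNn]
      exact bot_le
  refine (measure_openOf_le_tsum μ W).trans (ENNReal.tsum_le_of_sum_range_le fun M => ?_)
  refine (Finset.sum_le_sum fun n _ => hlevel n).trans ?_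
  rw [← ENNReal.ofReal_sum_of_nonneg fun n _ => by positivity, ← Finset.mul_sum]
  exact ENNReal.ofReal_le_ofReal
    (mul_le_mul_of_nonneg_left (sum_range_ite_inv_sq_le hN M) (by positivity))

theorem CE.of_primrecPred {α : Type} [Primcodable α] {P : α → Prop} (hP : PrimrecPred P) :
    CE {a | P a} :=
  ⟨fun a => Part.assert (P a) fun _ => Part.some (), hP.computablePred.to_re,
    fun a => by simp [Part.assert, Part.some]⟩

theorem primrec_count_true : Primrec fun σ : Str => σ.count true :=
  (Primrec.list_length.comp (Primrec.listFilter
    (Primrec.eq.comp Primrec.id (Primrec.const true)))).of_eq fun σ => by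
    simp [List.count_eq_length_filter]

theorem MLRandom.eventually_restr_not_mem {μ : Measure Cantor} {X : Cantor} (hX : MLRandom μ X)
    {V : Set Str} (hV : PrimrecPred (· ∈ V)) {C : ℝ}
    (hC : ∀ N : ℕ, 0 < N → μ (openOf {σ | σ ∈ V ∧ N ≤ σ.length}) ≤ ENNReal.ofReal (C / N)) :
    ∀ᶠ n in atTop, restr X n ∉ V := by
  obtain ⟨K, hCK⟩ := exists_nat_ge C
  set U : ℕ → Set Str := fun i => {σ | σ ∈ V ∧ (K + 1) * 2 ^ i ≤ σ.length}
  have hU : MLTest μ U := by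
    refine ⟨CE.of_primrecPred ?_, fun i => ?_⟩
    · exact (hV.comp Primrec.snd).and <| Primrec.nat_le.comp
        (Primrec.nat_mul.comp (Primrec.const _)
          ((Primrec₂.unpaired'.1 Nat.Primrec.pow).comp (Primrec.const 2) Primrec.fst))
        (Primrec.list_length.comp Primrec.snd)
    · refine (hC _ (by positivity)).trans ?_
      calc ENNReal.ofReal (C / ((K + 1) * 2 ^ i : ℕ)) ≤ ENNReal.ofReal (1 / 2 ^ i) := by
            refine ENNReal.ofReal_le_ofReal ?_
            rw [Nat.cast_mul, Nat.cast_pow, Nat.cast_ofNat, ← div_div]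
            gcongr
            rw [div_le_one (by positivity)]
            push_cast
            linarith
        _ = 1 / 2 ^ i := by
            rw [ENNReal.ofReal_div_of_pos (by positivity), ENNReal.ofReal_one,
              ENNReal.ofReal_pow zero_le_two, ENNReal.ofReal_ofNat]
  obtain ⟨i, hi⟩ := hX U hU
  filter_upwards [eventually_ge_atTop ((K + 1) * 2 ^ i)] with n hn hnV
  exact hi (Set.mem_biUnion ⟨hnV, by rwa [length_restr]⟩ (mem_cyl_restr X n))

theorem MLRandom.eventually_restr_not_mem_of_le_abs_deviation {p : ℝ} {μ : Measure Cantor}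
    (hμ : BernoulliSpec p μ) (hp : p ∈ Set.Icc (0 : ℝ) 1) {X : Cantor} (hX : MLRandom μ X)
    {ε : ℝ} (hε : 0 < ε) {V : Set Str} (hV : PrimrecPred (· ∈ V))
    (hdev : ∀ σ ∈ V, ε * σ.length ≤ |deviation p σ|) : ∀ᶠ n in atTop, restr X n ∉ V :=
  hX.eventually_restr_not_mem hV (C := (ε ^ 4)⁻¹ * 2) fun _ hN =>
    (hμ.measure_openOf_le hp hε hdev hN).trans_eq (by rw [mul_div_assoc])

theorem MLRandom.eventually_count_true_lt {p : ℝ} {μ : Measure Cantor} (hμ : BernoulliSpec p μ)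
    (hp : p ∈ Set.Icc (0 : ℝ) 1) {X : Cantor} (hX : MLRandom μ X) {a b : ℕ} (hb : 0 < b)
    (hpab : p < a / b) : ∀ᶠ n in atTop, b * (restr X n).count true < a * n := by
  set V : Set Str := {σ | a * σ.length ≤ b * σ.count true}
  have hV : PrimrecPred (· ∈ V) :=
    Primrec.nat_le.comp (Primrec.nat_mul.comp (Primrec.const a) Primrec.list_length)
      (Primrec.nat_mul.comp (Primrec.const b) primrec_count_true)
  have hdev : ∀ σ ∈ V, (a / b - p) * σ.length ≤ |deviation p σ| := by
    intro σ hσ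
    have hσ' : (a : ℝ) * σ.length ≤ b * σ.count true := by exact_mod_cast hσ
    have hfreq : (a / b : ℝ) * σ.length ≤ σ.count true := by
      rw [div_mul_eq_mul_div, div_le_iff₀ (by exact_mod_cast hb)]; linarith
    refine le_trans ?_ (le_abs_self _)
    rw [deviation]; linarith
  filter_upwards [hX.eventually_restr_not_mem_of_le_abs_deviation hμ hp (sub_pos.2 hpab) hV hdev]
    with n hn
  exact lt_of_not_ge (by simpa only [V, Set.mem_ofPred_eq, length_restr] using hn)

theorem MLRandom.eventually_lt_count_true {p : ℝ} {μ : Measure Cantor} (hμ : BernoulliSpec p μ)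
    (hp : p ∈ Set.Icc (0 : ℝ) 1) {X : Cantor} (hX : MLRandom μ X) {a b : ℕ} (hb : 0 < b)
    (habp : a / b < p) : ∀ᶠ n in atTop, a * n < b * (restr X n).count true := by
  set V : Set Str := {σ | b * σ.count true ≤ a * σ.length}
  have hV : PrimrecPred (· ∈ V) :=
    Primrec.nat_le.comp (Primrec.nat_mul.comp (Primrec.const b) primrec_count_true)
      (Primrec.nat_mul.comp (Primrec.const a) Primrec.list_length)
  have hdev : ∀ σ ∈ V, (p - a / b) * σ.length ≤ |deviation p σ| := by
    intro σ hσ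
    have hσ' : (b : ℝ) * σ.count true ≤ a * σ.length := by exact_mod_cast hσ
    have hfreq : (σ.count true : ℝ) ≤ (a / b : ℝ) * σ.length := by
      rw [div_mul_eq_mul_div, le_div_iff₀ (by exact_mod_cast hb)]; linarith
    refine le_trans ?_ (neg_le_abs _)
    rw [deviation]; linarith
  filter_upwards [hX.eventually_restr_not_mem_of_le_abs_deviation hμ hp (sub_pos.2 habp) hV hdev]
    with n hn
  exact lt_of_not_ge (by simpa only [V, Set.mem_ofPred_eq, length_restr] using hn)

theorem exists_nat_div_btwn {p q : ℝ} (hp : 0 ≤ p) (hpq : p < q) :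
    ∃ a b : ℕ, 0 < b ∧ p < a / b ∧ (a : ℝ) / b < q := by
  obtain ⟨r, hpr, hrq⟩ := exists_rat_btwn hpq
  have hr : (r.num.toNat : ℝ) / r.den = r := by
    rw [Rat.cast_def, ← Int.cast_natCast, Int.toNat_of_nonneg]
    exact Rat.num_nonneg.2 (by exact_mod_cast hp.trans hpr.le)
  exact ⟨r.num.toNat, r.den, r.den_pos, hr ▸ hpr, hr ▸ hrq⟩

/-- The Bernoulli measures are effectively orthogonal: for `p ≠ q` in `[0,1]` no real is
Martin-Löf random with respect to both Bernoulli(`p`) and Bernoulli(`q`). -/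
theorem stmt6 (p q : ℝ) (hp : p ∈ Set.Icc (0 : ℝ) 1) (hq : q ∈ Set.Icc (0 : ℝ) 1)
    (hpq : p ≠ q) (μp μq : Measure Cantor)
    (hμp : BernoulliSpec p μp) (hμq : BernoulliSpec q μq) :
    ∀ X : Cantor, ¬ (MLRandom μp X ∧ MLRandom μq X) := by
  intro X ⟨hXp, hXq⟩
  wlog hlt : p < q generalizing p q μp μq
  · exact this q p hq hp hpq.symm μq μp hμq hμp hXq hXp (hpq.symm.lt_of_le (not_lt.1 hlt))
  obtain ⟨a, b, hb, hpab, habq⟩ := exists_nat_div_btwn hp.1 hlt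
  obtain ⟨n, hlow, hhigh⟩ := ((hXp.eventually_count_true_lt hμp hp hb hpab).and
    (hXq.eventually_lt_count_true hμq hq hb habq)).exists
  omega
end

section
/- The map f_b from Cantor space to the space of Borel probability measures on Cantor space, sending X to the Bernoulli measure with success probability Σ_n X(n)2^{-(n+1)}, is continuous (indeed computable as a map of computable metric spaces). -/
open MeasureTheory Filter

/-- The real number in `[0,1]` with binary expansion `X`. -/
noncomputable def binVal (X : Cantor) : ℝ := ∑' n : ℕ, if X n then ((2 : ℝ) ^ (n + 1))⁻¹ else 0

/-- The cylinder values of the Bernoulli measure with success probability `p`. -/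
def bernFn (p : ℝ) : Str → ℝ := fun σ => p ^ σ.count true * (1 - p) ^ σ.count false

/-- The maximum difference of two cylinder-value functions over strings of length `n`. -/
noncomputable def levDiff (f g : Str → ℝ) (n : ℕ) : ℝ :=
  sSup {x : ℝ | ∃ v : Fin n → Bool, x = |f (List.ofFn v) - g (List.ofFn v)|}

/-- The metric on the space of measures (represented by cylinder values):
`d(μ,ν) = Σₙ 2⁻ⁿ · max_{σ ∈ 2ⁿ} |μ(σ) − ν(σ)|`. -/
noncomputable def Dm (f g : Str → ℝ) : ℝ := ∑' n : ℕ, (2 : ℝ)⁻¹ ^ n * levDiff f g n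


/-!
On strings of length `n` the Bernoulli cylinder values `p ^ k * (1 - p) ^ (n - k)` are
`n`-Lipschitz in `p ∈ [0, 1]`, so `Dm (bernFn p) (bernFn q) ≤ ∑ n 2⁻ⁿ |p - q| = 2 |p - q|`.
Binary expansions agreeing on their first `N + 1` digits give reals within `2⁻⁽ᴺ⁺¹⁾`, so
`n ↦ n + 2` is a computable modulus of uniform continuity for `X ↦ bernFn (binVal X)`.
-/

section PowerBounds

variable {R : Type*} [CommRing R] [LinearOrder R] [IsStrictOrderedRing R]

theorem abs_pow_sub_pow_le_of_abs_le_one {a b : R} (ha : |a| ≤ 1) (hb : |b| ≤ 1) (n : ℕ) :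
    |a ^ n - b ^ n| ≤ n * |a - b| :=
  calc |a ^ n - b ^ n| ≤ |a - b| * n * max |a| |b| ^ (n - 1) := abs_pow_sub_pow_le ..
    _ ≤ |a - b| * n * 1 := by
        gcongr
        exact pow_le_one₀ (le_max_of_le_left (abs_nonneg a)) (max_le ha hb)
    _ = n * |a - b| := by ring

theorem abs_mul_sub_mul_le_of_abs_le_one {a b c d : R} (hb : |b| ≤ 1) (hc : |c| ≤ 1) :
    |a * b - c * d| ≤ |a - c| + |b - d| :=
  calc |a * b - c * d| = |(a - c) * b + c * (b - d)| := by ring_nf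
    _ ≤ |a - c| * |b| + |c| * |b - d| := by
        rw [← abs_mul, ← abs_mul]
        exact abs_add_le _ _
    _ ≤ |a - c| * 1 + 1 * |b - d| := by gcongr
    _ = |a - c| + |b - d| := by ring

end PowerBounds

theorem abs_bernFn_sub_le {p q : ℝ} (hp : p ∈ Set.Icc (0 : ℝ) 1) (hq : q ∈ Set.Icc (0 : ℝ) 1)
    (σ : Str) : |bernFn p σ - bernFn q σ| ≤ σ.length * |p - q| := by
  have abs_le_one {x : ℝ} (hx : x ∈ Set.Icc (0 : ℝ) 1) : |x| ≤ 1 :=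
    abs_le.2 ⟨by linarith [hx.1], hx.2⟩
  have hp' : |1 - p| ≤ 1 := abs_le_one ⟨by linarith [hp.2], by linarith [hp.1]⟩
  have hq' : |1 - q| ≤ 1 := abs_le_one ⟨by linarith [hq.2], by linarith [hq.1]⟩
  set k := σ.count true
  set l := σ.count false
  calc |bernFn p σ - bernFn q σ| ≤ |p ^ k - q ^ k| + |(1 - p) ^ l - (1 - q) ^ l| :=
        abs_mul_sub_mul_le_of_abs_le_one (by rw [abs_pow]; exact pow_le_one₀ (abs_nonneg _) hp')
          (by rw [abs_pow]; exact pow_le_one₀ (abs_nonneg _) (abs_le_one hq))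
    _ ≤ k * |p - q| + l * |(1 - p) - (1 - q)| :=
        add_le_add (abs_pow_sub_pow_le_of_abs_le_one (abs_le_one hp) (abs_le_one hq) k)
          (abs_pow_sub_pow_le_of_abs_le_one hp' hq' l)
    _ = σ.length * |p - q| := by
        rw [← List.count_true_add_count_false σ, sub_sub_sub_cancel_left, abs_sub_comm q]
        push_cast
        ring

theorem levDiff_nonneg (f g : Str → ℝ) (n : ℕ) : 0 ≤ levDiff f g n :=
  Real.sSup_nonneg fun _ ⟨_, hv⟩ => hv ▸ abs_nonneg _

theorem levDiff_le {f g : Str → ℝ} {n : ℕ} {c : ℝ} (hc : 0 ≤ c)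
    (h : ∀ σ : Str, σ.length = n → |f σ - g σ| ≤ c) : levDiff f g n ≤ c :=
  Real.sSup_le (fun _ ⟨_, hv⟩ => hv ▸ h _ List.length_ofFn) hc

theorem Dm_le_of_levDiff_le {f g : Str → ℝ} {c : ℝ}
    (h : ∀ n : ℕ, levDiff f g n ≤ n * c) : Dm f g ≤ 2 * c := by
  have hr : ‖(2 : ℝ)⁻¹‖ < 1 := by norm_num
  have hbound : Summable fun n : ℕ => (2 : ℝ)⁻¹ ^ n * (n * c) := by
    refine ((summable_pow_mul_geometric_of_norm_lt_one 1 hr).mul_right c).congr fun n => ?_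
    ring
  have hterm (n : ℕ) : (2 : ℝ)⁻¹ ^ n * levDiff f g n ≤ (2 : ℝ)⁻¹ ^ n * (n * c) := by
    gcongr
    exact h n
  calc Dm f g ≤ ∑' n : ℕ, (2 : ℝ)⁻¹ ^ n * (n * c) :=
        (hbound.of_nonneg_of_le (fun n => mul_nonneg (by positivity) (levDiff_nonneg f g n))
          hterm).tsum_le_tsum hterm hbound
    _ = (∑' n : ℕ, n * (2 : ℝ)⁻¹ ^ n) * c := by
        rw [← tsum_mul_right]
        congr 1 with n
        ring
    _ = 2 * c := by
        rw [tsum_coe_mul_geometric_of_norm_lt_one hr]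
        norm_num

theorem Dm_bernFn_le {p q : ℝ} (hp : p ∈ Set.Icc (0 : ℝ) 1) (hq : q ∈ Set.Icc (0 : ℝ) 1) :
    Dm (bernFn p) (bernFn q) ≤ 2 * |p - q| :=
  Dm_le_of_levDiff_le fun _ =>
    levDiff_le (by positivity) fun σ hσ => hσ ▸ abs_bernFn_sub_le hp hq σ

noncomputable def binTerm (X : Cantor) (n : ℕ) : ℝ :=
  if X n then ((2 : ℝ) ^ (n + 1))⁻¹ else 0

theorem binVal_eq_tsum_binTerm (X : Cantor) : binVal X = ∑' n, binTerm X n := rfl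

theorem binTerm_nonneg (X : Cantor) (n : ℕ) : 0 ≤ binTerm X n := by
  unfold binTerm
  split_ifs <;> positivity

theorem binTerm_le (X : Cantor) (n : ℕ) : binTerm X n ≤ 2⁻¹ * 2⁻¹ ^ n := by
  unfold binTerm
  split_ifs
  · rw [← inv_pow, pow_succ']
  · positivity

theorem summable_binTerm (X : Cantor) : Summable (binTerm X) :=
  (summable_geometric_two.mul_left 2⁻¹).of_nonneg_of_le (binTerm_nonneg X)
    (by simpa only [one_div] using binTerm_le X)

theorem binVal_mem_Icc (X : Cantor) : binVal X ∈ Set.Icc (0 : ℝ) 1 := by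
  refine ⟨tsum_nonneg (binTerm_nonneg X), ?_⟩
  calc binVal X ≤ ∑' n : ℕ, (2 : ℝ)⁻¹ * 2⁻¹ ^ n :=
        (summable_binTerm X).tsum_le_tsum (binTerm_le X)
          (by simpa only [one_div] using summable_geometric_two.mul_left 2⁻¹)
    _ = 1 := by rw [tsum_mul_left, tsum_geometric_inv_two]; norm_num

theorem abs_binTerm_sub_le {X Y : Cantor} {N : ℕ} (h : ∀ n < N, X n = Y n) (n : ℕ) :
    |binTerm X n - binTerm Y n| ≤ 2⁻¹ * if N ≤ n then 2⁻¹ ^ n else 0 := by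
  split_ifs with hn
  · have := binTerm_le X n
    have := binTerm_le Y n
    have := binTerm_nonneg X n
    have := binTerm_nonneg Y n
    exact abs_sub_le_iff.2 ⟨by linarith, by linarith⟩
  · simp [binTerm, h n (not_le.1 hn)]

theorem abs_binVal_sub_le {X Y : Cantor} {N : ℕ} (h : ∀ n < N, X n = Y n) :
    |binVal X - binVal Y| ≤ 2⁻¹ ^ N := by
  have htail : Summable fun n : ℕ => (2 : ℝ)⁻¹ * if N ≤ n then 2⁻¹ ^ n else 0 := by
    refine (summable_geometric_two.mul_left 2⁻¹).of_nonneg_of_le (fun n => by positivity)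
      fun n => ?_
    gcongr
    split_ifs <;> simp
  calc |binVal X - binVal Y| = ‖∑' n, (binTerm X n - binTerm Y n)‖ := by
        rw [Real.norm_eq_abs, binVal_eq_tsum_binTerm, binVal_eq_tsum_binTerm,
          (summable_binTerm X).tsum_sub (summable_binTerm Y)]
    _ ≤ ∑' n, (2 : ℝ)⁻¹ * if N ≤ n then 2⁻¹ ^ n else 0 :=
        tsum_of_norm_bounded htail.hasSum (abs_binTerm_sub_le h)
    _ = 2⁻¹ ^ N := by rw [tsum_mul_left, tsum_geometric_inv_two_ge, ← mul_assoc]; norm_num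

theorem restr_eq_restr_iff {X Y : Cantor} {N : ℕ} :
    restr X N = restr Y N ↔ ∀ n < N, X n = Y n := by
  simp [restr, List.map_inj_left]

theorem Dm_bernFn_binVal_le {X Y : Cantor} {N : ℕ} (h : restr X (N + 1) = restr Y (N + 1)) :
    Dm (bernFn (binVal X)) (bernFn (binVal Y)) ≤ 2⁻¹ ^ N :=
  calc Dm (bernFn (binVal X)) (bernFn (binVal Y)) ≤ 2 * |binVal X - binVal Y| :=
        Dm_bernFn_le (binVal_mem_Icc X) (binVal_mem_Icc Y)
    _ ≤ 2 * 2⁻¹ ^ (N + 1) := by gcongr; exact abs_binVal_sub_le (restr_eq_restr_iff.1 h)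
    _ = 2⁻¹ ^ N := by rw [pow_succ]; ring

/-- The map `f_b` sending `X` to the Bernoulli measure with success probability the real
with binary expansion `X` is continuous from Cantor space to the space of measures with
the metric `Dm`, and indeed computable: it has a computable modulus of continuity. -/
theorem stmt15 :
    (∀ X : Cantor, ∀ ε > (0 : ℝ), ∃ N : ℕ, ∀ Y : Cantor,
      restr X N = restr Y N → Dm (bernFn (binVal X)) (bernFn (binVal Y)) < ε) ∧
    ∃ g : ℕ → ℕ, Computable g ∧ ∀ (n : ℕ) (X Y : Cantor),
      restr X (g n) = restr Y (g n) →
        Dm (bernFn (binVal X)) (bernFn (binVal Y)) < (2 : ℝ)⁻¹ ^ n := by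
  have modulus (n : ℕ) (X Y : Cantor) (h : restr X (n + 2) = restr Y (n + 2)) :
      Dm (bernFn (binVal X)) (bernFn (binVal Y)) < (2 : ℝ)⁻¹ ^ n :=
    (Dm_bernFn_binVal_le h).trans_lt (pow_lt_pow_right_of_lt_one₀ (by norm_num) (by norm_num)
      n.lt_succ_self)
  refine ⟨fun X ε hε => ?_, fun n => n + 2, Computable.succ.comp Computable.succ, modulus⟩
  obtain ⟨n, hn⟩ := exists_pow_lt_of_lt_one hε (by norm_num : (2 : ℝ)⁻¹ < 1)
  exact ⟨n + 2, fun Y h => (modulus n X Y h).trans hn⟩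
end
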